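/- Suppose the relevant l₁-ancestors of ρ and the relevant l₂-ancestors of ρ' touch after some run ρ₀ (i.e. there exist ρ₀ ≺ ρ_A ∈ RelAnc_{l₁}(ρ) and ρ₀ ≺ ρ_B ∈ RelAnc_{l₂}(ρ') with ρ_A = ρ_B or ρ_A related to ρ_B by one of the relations →, ←, ↪, ↩, ⊞, ⊟). Then RelAnc_{l₁+1}(ρ) ∩ RelAnc_{l₂+1}(ρ') ∩ {π : ρ₀ ⪯ π} ≠ ∅. -/
import Mathlib


namespace S10

/-- Proper initial segment of runs. -/
def PPrefix {C : Type} (x y : List C) : Prop := x <+: y ∧ x ≠ y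

/-- Relevant `l`-ancestors, generated backwards by the forward relations
`r₁` (one-step transition), `r₂` (jump) and `r₃` (`⊞`). -/
def relAnc {C : Type} (r₁ r₂ r₃ : List C → List C → Prop) : ℕ → List C → Set (List C)
  | 0, ρ => {ρ}
  | l + 1, ρ => relAnc r₁ r₂ r₃ l ρ ∪
      {π | ∃ π' ∈ relAnc r₁ r₂ r₃ l ρ, r₁ π π' ∨ r₂ π π' ∨ r₃ π π'}

/-- If `RelAnc_{l₁}(ρ)` and `RelAnc_{l₂}(ρ')` touch after `ρ₀` — i.e. there are
`ρ₀ ≺ ρ_A ∈ RelAnc_{l₁}(ρ)` and `ρ₀ ≺ ρ_B ∈ RelAnc_{l₂}(ρ')` with `ρ_A = ρ_B`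
or `ρ_A` related to `ρ_B` by one of `→, ←, ↪, ↩, ⊞, ⊟` — then
`RelAnc_{l₁+1}(ρ) ∩ RelAnc_{l₂+1}(ρ') ∩ {π : ρ₀ ⪯ π} ≠ ∅`. -/
theorem touch_intersect {C : Type} (r₁ r₂ r₃ : List C → List C → Prop)
    (l₁ l₂ : ℕ) (ρ ρ' ρ₀ : List C)
    (htouch : ∃ ρA ρB, PPrefix ρ₀ ρA ∧ PPrefix ρ₀ ρB ∧
      ρA ∈ relAnc r₁ r₂ r₃ l₁ ρ ∧ ρB ∈ relAnc r₁ r₂ r₃ l₂ ρ' ∧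
      (ρA = ρB ∨ r₁ ρA ρB ∨ r₂ ρA ρB ∨ r₃ ρA ρB ∨
        r₁ ρB ρA ∨ r₂ ρB ρA ∨ r₃ ρB ρA)) :
    ∃ π, π ∈ relAnc r₁ r₂ r₃ (l₁ + 1) ρ ∧ π ∈ relAnc r₁ r₂ r₃ (l₂ + 1) ρ' ∧
      ρ₀ <+: π := by
  obtain ⟨ρA, ρB, hA, hB, hAm, hBm, hrel⟩ := htouch
  have hsubA : ρA ∈ relAnc r₁ r₂ r₃ (l₁ + 1) ρ := Or.inl hAm
  have hsubB : ρB ∈ relAnc r₁ r₂ r₃ (l₂ + 1) ρ' := Or.inl hBm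
  rcases hrel with h | h | h | h | h | h | h
  · exact ⟨ρA, hsubA, h ▸ hsubB, hA.1⟩
  · exact ⟨ρA, hsubA, Or.inr ⟨ρB, hBm, Or.inl h⟩, hA.1⟩
  · exact ⟨ρA, hsubA, Or.inr ⟨ρB, hBm, Or.inr (Or.inl h)⟩, hA.1⟩
  · exact ⟨ρA, hsubA, Or.inr ⟨ρB, hBm, Or.inr (Or.inr h)⟩, hA.1⟩
  · exact ⟨ρB, Or.inr ⟨ρA, hAm, Or.inl h⟩, hsubB, hB.1⟩
  · exact ⟨ρB, Or.inr ⟨ρA, hAm, Or.inr (Or.inl h)⟩, hsubB, hB.1⟩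
  · exact ⟨ρB, Or.inr ⟨ρA, hAm, Or.inr (Or.inr h)⟩, hsubB, hB.1⟩

end S10
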